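/- arXiv:1402.2033 — 2 statements merged into one kernel-verified Lean document; each statement's English description precedes it below -/
import Mathlib

section
/- Let C be a closed model category and g: X→Y a morphism in C. The Quillen adjunction (g_!, g^*): (X↓C) → (Y↓C) is a Quillen equivalence if and only if for every cofibrant object u of (X↓C) (i.e. every u: X→C that is a cofibration in C), the cobase change of g along u is a weak equivalence in C. -/
open CategoryTheory CategoryTheory.Limits

universe v u v' u'

/-- `f` is a retract of `g` in the arrow category. -/
def IsRetractOfArrow {C : Type u} [Category.{v} C] {A B A' B' : C}
    (f : A ⟶ B) (g : A' ⟶ B') : Prop :=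
  ∃ (i : Arrow.mk f ⟶ Arrow.mk g) (r : Arrow.mk g ⟶ Arrow.mk f), i ≫ r = 𝟙 (Arrow.mk f)

/-- A (closed) model structure on a category `C`, in the sense of Quillen: three classes of
morphisms (cofibrations, fibrations, weak equivalences) satisfying the two-out-of-three
axiom, closure under retracts, the lifting axioms and the factorization axioms. -/
structure ModelStruct (C : Type u) [Category.{v} C] : Type (max u v) where
  cof : MorphismProperty C
  fib : MorphismProperty C
  weq : MorphismProperty C
  weq_comp : ∀ {X Y Z : C} (f : X ⟶ Y) (g : Y ⟶ Z), weq f → weq g → weq (f ≫ g)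
  weq_cancel_left : ∀ {X Y Z : C} (f : X ⟶ Y) (g : Y ⟶ Z), weq f → weq (f ≫ g) → weq g
  weq_cancel_right : ∀ {X Y Z : C} (f : X ⟶ Y) (g : Y ⟶ Z), weq g → weq (f ≫ g) → weq f
  cof_retract : ∀ {A B A' B' : C} {f : A ⟶ B} {g : A' ⟶ B'},
    IsRetractOfArrow f g → cof g → cof f
  fib_retract : ∀ {A B A' B' : C} {f : A ⟶ B} {g : A' ⟶ B'},
    IsRetractOfArrow f g → fib g → fib f
  weq_retract : ∀ {A B A' B' : C} {f : A ⟶ B} {g : A' ⟶ B'},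
    IsRetractOfArrow f g → weq g → weq f
  lifting_cof_trivFib : ∀ {A B X Y : C} (i : A ⟶ B) (p : X ⟶ Y),
    cof i → fib p → weq p → HasLiftingProperty i p
  lifting_trivCof_fib : ∀ {A B X Y : C} (i : A ⟶ B) (p : X ⟶ Y),
    cof i → weq i → fib p → HasLiftingProperty i p
  factor_cof_trivFib : ∀ {X Y : C} (f : X ⟶ Y),
    ∃ (Z : C) (i : X ⟶ Z) (p : Z ⟶ Y), cof i ∧ fib p ∧ weq p ∧ i ≫ p = f
  factor_trivCof_fib : ∀ {X Y : C} (f : X ⟶ Y),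
    ∃ (Z : C) (i : X ⟶ Z) (p : Z ⟶ Y), cof i ∧ weq i ∧ fib p ∧ i ≫ p = f

variable {C : Type u} [Category.{v} C]

/-- An object is cofibrant if the unique map from the initial object to it is a cofibration. -/
def ModelStruct.Cofibrant [HasInitial C] (M : ModelStruct C) (A : C) : Prop :=
  M.cof (initial.to A)

/-- An object is fibrant if the unique map from it to the terminal object is a fibration. -/
def ModelStruct.Fibrant [HasTerminal C] (M : ModelStruct C) (A : C) : Prop :=
  M.fib (terminal.from A)

/-- The induced model structure on the coslice category `(X ↓ C)`: a morphism is a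
cofibration, fibration or weak equivalence iff its underlying morphism in `C` is one. -/
def ModelStruct.under (M : ModelStruct C) (X : C) : ModelStruct (Under X) where
  cof _ _ f := M.cof f.right
  fib _ _ f := M.fib f.right
  weq _ _ f := M.weq f.right
  weq_comp f g hf hg := by simpa using M.weq_comp f.right g.right hf hg
  weq_cancel_left f g hf hfg := M.weq_cancel_left f.right g.right hf (by simpa using hfg)
  weq_cancel_right f g hg hfg := M.weq_cancel_right f.right g.right hg (by simpa using hfg)
  cof_retract := fun ⟨i, r, hir⟩ hg => M.cof_retract
    ⟨(Under.forget X).mapArrow.map i, (Under.forget X).mapArrow.map r,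
      by
        have h := congrArg (Under.forget X).mapArrow.map hir
        rw [CategoryTheory.Functor.map_comp, CategoryTheory.Functor.map_id] at h
        exact h⟩ hg
  fib_retract := fun ⟨i, r, hir⟩ hg => M.fib_retract
    ⟨(Under.forget X).mapArrow.map i, (Under.forget X).mapArrow.map r,
      by
        have h := congrArg (Under.forget X).mapArrow.map hir
        rw [CategoryTheory.Functor.map_comp, CategoryTheory.Functor.map_id] at h
        exact h⟩ hg
  weq_retract := fun ⟨i, r, hir⟩ hg => M.weq_retract
    ⟨(Under.forget X).mapArrow.map i, (Under.forget X).mapArrow.map r,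
      by
        have h := congrArg (Under.forget X).mapArrow.map hir
        rw [CategoryTheory.Functor.map_comp, CategoryTheory.Functor.map_id] at h
        exact h⟩ hg
  lifting_cof_trivFib i p hi hp hp' := by
    constructor
    intro f g sq
    haveI := M.lifting_cof_trivFib i.right p.right hi hp hp'
    have sq' : CommSq f.right i.right p.right g.right :=
      ⟨by rw [← Under.comp_right, sq.w, Under.comp_right]⟩
    exact ⟨⟨⟨Under.homMk sq'.lift (by
        rw [← Under.w i, Category.assoc, sq'.fac_left, Under.w f]),
      by ext; exact sq'.fac_left, by ext; exact sq'.fac_right⟩⟩⟩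
  lifting_trivCof_fib i p hi hi' hp := by
    constructor
    intro f g sq
    haveI := M.lifting_trivCof_fib i.right p.right hi hi' hp
    have sq' : CommSq f.right i.right p.right g.right :=
      ⟨by rw [← Under.comp_right, sq.w, Under.comp_right]⟩
    exact ⟨⟨⟨Under.homMk sq'.lift (by
        rw [← Under.w i, Category.assoc, sq'.fac_left, Under.w f]),
      by ext; exact sq'.fac_left, by ext; exact sq'.fac_right⟩⟩⟩
  factor_cof_trivFib {A B} f := by
    obtain ⟨Z, i, p, hi, hp, hp', hfac⟩ := M.factor_cof_trivFib f.right
    exact ⟨Under.mk (A.hom ≫ i), Under.homMk i rfl,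
      Under.homMk p (by show (A.hom ≫ i) ≫ p = B.hom; rw [Category.assoc, hfac, Under.w f]),
      hi, hp, hp', by ext; exact hfac⟩
  factor_trivCof_fib {A B} f := by
    obtain ⟨Z, i, p, hi, hi', hp, hfac⟩ := M.factor_trivCof_fib f.right
    exact ⟨Under.mk (A.hom ≫ i), Under.homMk i rfl,
      Under.homMk p (by show (A.hom ≫ i) ≫ p = B.hom; rw [Category.assoc, hfac, Under.w f]),
      hi, hi', hp, by ext; exact hfac⟩

/-- The induced model structure on the slice category `(C ↓ X)`: a morphism is a
cofibration, fibration or weak equivalence iff its underlying morphism in `C` is one. -/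
def ModelStruct.over (M : ModelStruct C) (X : C) : ModelStruct (Over X) where
  cof _ _ f := M.cof f.left
  fib _ _ f := M.fib f.left
  weq _ _ f := M.weq f.left
  weq_comp f g hf hg := by simpa using M.weq_comp f.left g.left hf hg
  weq_cancel_left f g hf hfg := M.weq_cancel_left f.left g.left hf (by simpa using hfg)
  weq_cancel_right f g hg hfg := M.weq_cancel_right f.left g.left hg (by simpa using hfg)
  cof_retract := fun ⟨i, r, hir⟩ hg => M.cof_retract
    ⟨(Over.forget X).mapArrow.map i, (Over.forget X).mapArrow.map r,
      by
        have h := congrArg (Over.forget X).mapArrow.map hir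
        rw [CategoryTheory.Functor.map_comp, CategoryTheory.Functor.map_id] at h
        exact h⟩ hg
  fib_retract := fun ⟨i, r, hir⟩ hg => M.fib_retract
    ⟨(Over.forget X).mapArrow.map i, (Over.forget X).mapArrow.map r,
      by
        have h := congrArg (Over.forget X).mapArrow.map hir
        rw [CategoryTheory.Functor.map_comp, CategoryTheory.Functor.map_id] at h
        exact h⟩ hg
  weq_retract := fun ⟨i, r, hir⟩ hg => M.weq_retract
    ⟨(Over.forget X).mapArrow.map i, (Over.forget X).mapArrow.map r,
      by
        have h := congrArg (Over.forget X).mapArrow.map hir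
        rw [CategoryTheory.Functor.map_comp, CategoryTheory.Functor.map_id] at h
        exact h⟩ hg
  lifting_cof_trivFib i p hi hp hp' := by
    constructor
    intro f g sq
    haveI := M.lifting_cof_trivFib i.left p.left hi hp hp'
    have sq' : CommSq f.left i.left p.left g.left :=
      ⟨by rw [← Over.comp_left, sq.w, Over.comp_left]⟩
    exact ⟨⟨⟨Over.homMk sq'.lift (by
        rw [← Over.w p, ← Category.assoc, sq'.fac_right, Over.w g]),
      by ext; exact sq'.fac_left, by ext; exact sq'.fac_right⟩⟩⟩
  lifting_trivCof_fib i p hi hi' hp := by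
    constructor
    intro f g sq
    haveI := M.lifting_trivCof_fib i.left p.left hi hi' hp
    have sq' : CommSq f.left i.left p.left g.left :=
      ⟨by rw [← Over.comp_left, sq.w, Over.comp_left]⟩
    exact ⟨⟨⟨Over.homMk sq'.lift (by
        rw [← Over.w p, ← Category.assoc, sq'.fac_right, Over.w g]),
      by ext; exact sq'.fac_left, by ext; exact sq'.fac_right⟩⟩⟩
  factor_cof_trivFib {A B} f := by
    obtain ⟨Z, i, p, hi, hp, hp', hfac⟩ := M.factor_cof_trivFib f.left
    exact ⟨Over.mk (p ≫ B.hom), Over.homMk i (by show i ≫ p ≫ B.hom = A.hom; rw [← Category.assoc, hfac, Over.w f]),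
      Over.homMk p rfl, hi, hp, hp', by ext; exact hfac⟩
  factor_trivCof_fib {A B} f := by
    obtain ⟨Z, i, p, hi, hi', hp, hfac⟩ := M.factor_trivCof_fib f.left
    exact ⟨Over.mk (p ≫ B.hom), Over.homMk i (by show i ≫ p ≫ B.hom = A.hom; rw [← Category.assoc, hfac, Over.w f]),
      Over.homMk p rfl, hi, hi', hp, by ext; exact hfac⟩

noncomputable instance (X : C) : HasInitial (Under X) :=
  Under.mkIdInitial.hasInitial

noncomputable instance (X : C) : HasTerminal (Over X) :=
  Over.mkIdTerminal.hasTerminal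

/-- The terminal object of `(X ↓ C)` is `X ⟶ *`. -/
noncomputable def underMkTerminal [HasTerminal C] (X : C) :
    IsTerminal (Under.mk (terminal.from X)) :=
  IsTerminal.ofUniqueHom (fun u => Under.homMk (terminal.from u.right)
      (terminal.hom_ext _ _))
    (fun u m => by ext; exact terminal.hom_ext _ _)

noncomputable instance [HasTerminal C] (X : C) : HasTerminal (Under X) :=
  (underMkTerminal X).hasTerminal

/-- The initial object of `(C ↓ X)` is `∅ ⟶ X`. -/
noncomputable def overMkInitial [HasInitial C] (X : C) :
    IsInitial (Over.mk (initial.to X)) :=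
  IsInitial.ofUniqueHom (fun u => Over.homMk (initial.to u.left)
      (initial.hom_ext _ _))
    (fun u m => by ext; exact initial.hom_ext _ _)

noncomputable instance [HasInitial C] (X : C) : HasInitial (Over X) :=
  (overMkInitial X).hasInitial

/-- A Quillen adjunction between model categories: an adjoint pair whose left adjoint
preserves cofibrations and acyclic cofibrations. -/
structure QuillenAdjunction {C : Type u} [Category.{v} C] {D : Type u'} [Category.{v'} D]
    (M : ModelStruct C) (N : ModelStruct D) (F : C ⥤ D) (G : D ⥤ C) where
  adj : F ⊣ G
  map_cof : ∀ {A B : C} (f : A ⟶ B), M.cof f → N.cof (F.map f)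
  map_trivCof_weq : ∀ {A B : C} (f : A ⟶ B), M.cof f → M.weq f → N.weq (F.map f)

/-- A Quillen adjunction is a Quillen equivalence if for every cofibrant `A` and fibrant `B`,
a map `F A ⟶ B` is a weak equivalence iff its adjunct `A ⟶ G B` is. -/
def IsQuillenEquivalence {C : Type u} [Category.{v} C] {D : Type u'} [Category.{v'} D]
    [HasInitial C] [HasTerminal D]
    (M : ModelStruct C) (N : ModelStruct D) {F : C ⥤ D} {G : D ⥤ C} (adj : F ⊣ G) : Prop :=
  ∀ (A : C) (B : D), M.Cofibrant A → N.Fibrant B →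
    ∀ f : F.obj A ⟶ B, N.weq f ↔ M.weq ((adj.homEquiv A B) f)

/-! The left adjoint `g_!` sends `u : X ⟶ A` to `Y ⟶ A ⊔_X Y`, and the adjunct of
`f : g_! u ⟶ v` is `pushout.inl u.hom g ≫ f.right`. If every such `pushout.inl` is a weak
equivalence, two-out-of-three shows that `f` and its adjunct are weak equivalences together.
Conversely, apply the Quillen equivalence condition to a fibrant replacement `j : g_! u ⟶ Z`
(a trivial cofibration into a fibrant object): its adjunct `pushout.inl u.hom g ≫ j.right` is a
weak equivalence, hence so is `pushout.inl u.hom g`. -/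

lemma isRetractOfArrow_iso_comp {A A' B : C} (e : A' ≅ A) (f : A ⟶ B) :
    IsRetractOfArrow (e.hom ≫ f) f :=
  ⟨Arrow.homMk (u := e.hom) (v := 𝟙 B) (by simp),
    Arrow.homMk (u := e.inv) (v := 𝟙 B) (by simp), by ext <;> simp⟩

namespace ModelStruct

variable (M : ModelStruct C)

lemma cof_iso_comp_iff {A A' B : C} (e : A' ≅ A) (f : A ⟶ B) :
    M.cof (e.hom ≫ f) ↔ M.cof f := by
  refine ⟨fun h => ?_, M.cof_retract (isRetractOfArrow_iso_comp e f)⟩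
  rw [show f = e.inv ≫ e.hom ≫ f by simp]
  exact M.cof_retract (isRetractOfArrow_iso_comp e.symm _) h

lemma weq_comp_iff_of_weq_left {A B Z : C} {f : A ⟶ B} (hf : M.weq f) (h : B ⟶ Z) :
    M.weq (f ≫ h) ↔ M.weq h :=
  ⟨M.weq_cancel_left f h hf, M.weq_comp f h hf⟩

lemma exists_fibrant_replacement [HasTerminal C] (A : C) :
    ∃ (Z : C) (j : A ⟶ Z), M.cof j ∧ M.weq j ∧ M.Fibrant Z := by
  obtain ⟨Z, j, p, hj, hj', hp, -⟩ := M.factor_trivCof_fib (terminal.from A)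
  exact ⟨Z, j, hj, hj', by rwa [Fibrant, terminal.hom_ext (terminal.from Z) p]⟩

lemma under_cofibrant_iff {X : C} (u : Under X) :
    (M.under X).Cofibrant u ↔ M.cof u.hom := by
  let e : ⊥_ (Under X) ≅ Under.mk (𝟙 X) := initialIsoIsInitial Under.mkIdInitial
  have h : (initial.to u).right = e.hom.right ≫ u.hom := by
    rw [initial.hom_ext (initial.to u) (e.hom ≫ Under.mkIdInitial.to u), Under.comp_right,
      ← Under.w (Under.mkIdInitial.to u)]
    simp only [Under.mk_hom, Category.id_comp]
  rw [Cofibrant, show (M.under X).cof (initial.to u) ↔ M.cof (initial.to u).right from .rfl, h]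
  exact M.cof_iso_comp_iff ((Under.forget X).mapIso e) u.hom

end ModelStruct

lemma Under.mapPushoutAdj_homEquiv_right [HasPushouts C] {X Y : C} (g : X ⟶ Y)
    (u : Under X) (v : Under Y) (f : (Under.pushout g).obj u ⟶ v) :
    ((Under.mapPushoutAdj g).homEquiv u v f).right = pushout.inl u.hom g ≫ f.right := by
  rw [Under.mapPushoutAdj, Adjunction.mkOfHomEquiv_homEquiv]
  rfl

/-- **Statement 9.** For a morphism `g : X ⟶ Y` in a closed model category `C`, the Quillen
adjunction `(g_!, g^*) : (X ↓ C) → (Y ↓ C)` is a Quillen equivalence if and only if for every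
cofibrant object `u` of `(X ↓ C)` (i.e. every `u : X ⟶ C` that is a cofibration in `C`), the
cobase change of `g` along `u` is a weak equivalence in `C`. -/
theorem coslice_quillen_equivalence_iff {C : Type u} [Category.{v} C]
    [HasLimits C] [HasColimits C] (M : ModelStruct C) {X Y : C} (g : X ⟶ Y) :
    IsQuillenEquivalence (M.under X) (M.under Y) (Under.mapPushoutAdj g) ↔
      ∀ u : Under X, M.cof u.hom → M.weq (pushout.inl u.hom g) := by
  have adjunct_weq_iff (u : Under X) (v : Under Y) (f : (Under.pushout g).obj u ⟶ v) :
      (M.under X).weq ((Under.mapPushoutAdj g).homEquiv u v f) ↔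
        M.weq (pushout.inl u.hom g ≫ f.right) := by
    rw [← Under.mapPushoutAdj_homEquiv_right]
    rfl
  constructor
  · intro hQ u hu
    obtain ⟨Z, j, -, hj, hZ⟩ := (M.under Y).exists_fibrant_replacement ((Under.pushout g).obj u)
    have hadj := (adjunct_weq_iff u Z j).1 ((hQ u Z ((M.under_cofibrant_iff u).2 hu) hZ j).1 hj)
    exact M.weq_cancel_right _ _ hj hadj
  · intro h u v hu _ f
    rw [adjunct_weq_iff]
    exact (M.weq_comp_iff_of_weq_left (h u ((M.under_cofibrant_iff u).1 hu)) f.right).symm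
end

section
/- Let k be a field, R = k[x]/(x²), and let k denote the simple R-module R/(x). Then k and k⊕k are not stably isomorphic: there do not exist R-module homomorphisms f: k → k⊕k and g: k⊕k → k such that g∘f − id_k factors through a projective R-module and f∘g − id_{k⊕k} factors through a projective R-module. In particular, the unit map k → k⊕k of the adjunction (g_!, g^*) induced by the map 0 → k is not a stable equivalence. -/
open Polynomial

/-- `R = k[x]/(x²)`. -/
abbrev DualNumbers (k : Type u) [Field k] : Type u :=
  Polynomial k ⧸ (Ideal.span ({Polynomial.X ^ 2} : Set (Polynomial k)))

/-- The class of `x` in `R = k[x]/(x²)`. -/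
noncomputable def dnX (k : Type u) [Field k] : DualNumbers k :=
  Ideal.Quotient.mk _ Polynomial.X

/-- The simple module `k = R/(x)` over `R = k[x]/(x²)`. -/
abbrev SimpleMod (k : Type u) [Field k] : Type u :=
  DualNumbers k ⧸ (Ideal.span ({dnX k} : Set (DualNumbers k)))

/-- A linear map factors through a projective module. -/
def FactorsThroughProjective (R : Type u) [Ring R] {M N : Type u}
    [AddCommGroup M] [Module R M] [AddCommGroup N] [Module R N] (φ : M →ₗ[R] N) : Prop :=
  ∃ (P : Type u) (_ : AddCommGroup P) (_ : Module R P) (_ : Module.Projective R P)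
    (a : M →ₗ[R] P) (b : P →ₗ[R] N), b ∘ₗ a = φ

/-!
Over `R = k[x]/(x²)` the annihilator of `x` is `xR`, and this passes to free and then to projective
modules: an element of a projective module killed by `x` is divisible by `x`. Hence a map between
modules killed by `x` that factors through a projective module is zero, so a stable isomorphism
`k ≃ k ⊕ k` would be an honest `R`-linear isomorphism. It would also be `R/(x)`-linear, which is
impossible by comparing ranks over the nonzero commutative ring `R/(x)`.
-/

section AnnihilatorDivisible

variable {R : Type u} [CommRing R] {x : R}

theorem Finsupp.exists_eq_smul_of_smul_eq_zero (hx : ∀ r : R, x * r = 0 → x ∣ r) {ι : Type*}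
    {w : ι →₀ R} (hw : x • w = 0) : ∃ t, w = x • t := by
  suffices w ∈ LinearMap.range (LinearMap.lsmul R (ι →₀ R) x) by
    obtain ⟨t, ht⟩ := this
    exact ⟨t, ht.symm⟩
  rw [← Finsupp.sum_single w]
  refine Submodule.finsuppSum_mem _ _ _ _ fun i _ => ?_
  obtain ⟨c, hc⟩ := hx (w i) (by simpa using DFunLike.congr_fun hw i)
  exact ⟨Finsupp.single i c, by simp [hc]⟩

theorem Module.Projective.exists_eq_smul_of_smul_eq_zero (hx : ∀ r : R, x * r = 0 → x ∣ r)
    {P : Type*} [AddCommGroup P] [Module R P] [Module.Projective R P] {p : P} (hp : x • p = 0) :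
    ∃ q, p = x • q := by
  obtain ⟨s, hs⟩ := Module.Projective.out (R := R) (P := P)
  obtain ⟨t, ht⟩ := Finsupp.exists_eq_smul_of_smul_eq_zero hx (w := s p)
    (by rw [← map_smul, hp, map_zero])
  exact ⟨Finsupp.linearCombination R id t, by rw [← map_smul, ← ht, hs]⟩

theorem FactorsThroughProjective.eq_zero (hx : ∀ r : R, x * r = 0 → x ∣ r) {M N : Type u}
    [AddCommGroup M] [Module R M] [AddCommGroup N] [Module R N]
    (hM : ∀ m : M, x • m = 0) (hN : ∀ n : N, x • n = 0) {φ : M →ₗ[R] N}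
    (hφ : FactorsThroughProjective R φ) : φ = 0 := by
  obtain ⟨P, _, _, _, a, b, rfl⟩ := hφ
  ext m
  obtain ⟨q, hq⟩ := Module.Projective.exists_eq_smul_of_smul_eq_zero hx
    (by rw [← map_smul, hM, map_zero] : x • a m = 0)
  simp [hq, hN]

end AnnihilatorDivisible

theorem Ideal.Quotient.smul_eq_zero_of_mem {R : Type*} [CommRing R] {I : Ideal R} {x : R}
    (hx : x ∈ I) (m : R ⧸ I) : x • m = 0 := by
  rw [Algebra.smul_def, Ideal.Quotient.algebraMap_eq, Ideal.Quotient.eq_zero_iff_mem.2 hx,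
    zero_mul]

theorem Ideal.Quotient.isEmpty_linearEquiv_prod {R : Type*} [CommRing R] (I : Ideal R)
    [Nontrivial (R ⧸ I)] : IsEmpty ((R ⧸ I) ≃ₗ[R] (R ⧸ I) × (R ⧸ I)) := by
  refine ⟨fun e => ?_⟩
  have := (e.extendScalarsOfSurjective (S := R ⧸ I) Ideal.Quotient.mk_surjective).finrank_eq
  simp [Module.finrank_prod] at this

section DualNumbers

variable (k : Type u) [Field k]

theorem dnX_dvd_of_dnX_mul_eq_zero (r : DualNumbers k) (hr : dnX k * r = 0) : dnX k ∣ r := by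
  obtain ⟨p, rfl⟩ := Ideal.Quotient.mk_surjective r
  rw [dnX, ← map_mul, Ideal.Quotient.eq_zero_iff_mem, Ideal.mem_span_singleton, pow_two,
    mul_dvd_mul_iff_left X_ne_zero] at hr
  exact map_dvd _ hr

theorem dnX_sq : dnX k ^ 2 = 0 := by
  rw [dnX, ← map_pow, Ideal.Quotient.eq_zero_iff_mem]
  exact Ideal.mem_span_singleton_self _

instance : Nontrivial (DualNumbers k) :=
  Ideal.Quotient.nontrivial_iff.2 (by
    rw [Ne, Ideal.span_singleton_eq_top]
    exact fun h => (Polynomial.natDegree_eq_zero_of_isUnit h).not_gt (by simp))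

instance : Nontrivial (SimpleMod k) :=
  Ideal.Quotient.nontrivial_iff.2 (by
    rw [Ne, Ideal.span_singleton_eq_top]
    exact IsNilpotent.not_isUnit ⟨2, dnX_sq k⟩)

theorem dnX_smul_simpleMod (m : SimpleMod k) : dnX k • m = 0 :=
  Ideal.Quotient.smul_eq_zero_of_mem (Ideal.mem_span_singleton_self _) m

theorem dnX_smul_simpleMod_prod (m : SimpleMod k × SimpleMod k) : dnX k • m = 0 :=
  Prod.ext (dnX_smul_simpleMod k m.1) (dnX_smul_simpleMod k m.2)

theorem not_stablyIso_simpleMod_prod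
    (f : SimpleMod k →ₗ[DualNumbers k] SimpleMod k × SimpleMod k)
    (g : SimpleMod k × SimpleMod k →ₗ[DualNumbers k] SimpleMod k)
    (hgf : FactorsThroughProjective (DualNumbers k) (g ∘ₗ f - LinearMap.id))
    (hfg : FactorsThroughProjective (DualNumbers k) (f ∘ₗ g - LinearMap.id)) : False := by
  have hx := dnX_dvd_of_dnX_mul_eq_zero k
  have hgf' := sub_eq_zero.1 (hgf.eq_zero hx (dnX_smul_simpleMod k) (dnX_smul_simpleMod k))
  have hfg' := sub_eq_zero.1
    (hfg.eq_zero hx (dnX_smul_simpleMod_prod k) (dnX_smul_simpleMod_prod k))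
  exact (Ideal.Quotient.isEmpty_linearEquiv_prod _).false (LinearEquiv.ofLinearMap f g hfg' hgf')

end DualNumbers

/-- **Statement 16.** Let `k` be a field, `R = k[x]/(x²)`, and let `k` also denote the simple
`R`-module `R/(x)`. Then `k` and `k ⊕ k` are not stably isomorphic: there are no `R`-module maps
`f : k → k ⊕ k` and `g : k ⊕ k → k` such that `g ∘ f - id` and `f ∘ g - id` both factor through
projective `R`-modules. In particular the unit map `k → k ⊕ k`, `m ↦ (m, 0)`, of the adjunction
`(g_!, g^*)` induced by `0 → k` is not a stable equivalence. -/
theorem simple_not_stably_isomorphic_to_square (k : Type) [Field k] :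
    (¬ ∃ (f : SimpleMod k →ₗ[DualNumbers k] SimpleMod k × SimpleMod k)
        (g : SimpleMod k × SimpleMod k →ₗ[DualNumbers k] SimpleMod k),
        FactorsThroughProjective (DualNumbers k) ((g ∘ₗ f - LinearMap.id : SimpleMod k →ₗ[DualNumbers k] SimpleMod k)) ∧
        FactorsThroughProjective (DualNumbers k) ((f ∘ₗ g - LinearMap.id : SimpleMod k × SimpleMod k →ₗ[DualNumbers k] SimpleMod k × SimpleMod k))) ∧
    (¬ ∃ (g : SimpleMod k × SimpleMod k →ₗ[DualNumbers k] SimpleMod k),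
        FactorsThroughProjective (DualNumbers k)
          ((g ∘ₗ (LinearMap.prod LinearMap.id 0) - LinearMap.id : SimpleMod k →ₗ[DualNumbers k] SimpleMod k)) ∧
        FactorsThroughProjective (DualNumbers k)
          (((LinearMap.prod LinearMap.id 0) ∘ₗ g - LinearMap.id : SimpleMod k × SimpleMod k →ₗ[DualNumbers k] SimpleMod k × SimpleMod k))) := by
  exact ⟨fun ⟨f, g, hgf, hfg⟩ => not_stablyIso_simpleMod_prod k f g hgf hfg,
    fun ⟨g, hgf, hfg⟩ => not_stablyIso_simpleMod_prod k _ g hgf hfg⟩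
end
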